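/- Let R be a commutative Artinian local ring, M a finitely generated R-module, and m ≥ 0 a natural number. If the R-module Hom_R(M, R) has a direct summand that is a free R-module of rank m, then M itself has a direct summand that is a free R-module of rank m. -/

import Mathlib

/-- An `R`-module `N` has a free direct summand of rank `m` iff there is a split
surjection from `N` onto `R^m`. -/
def HasFreeSummand (R : Type*) [CommRing R] (N : Type*) [AddCommGroup N] [Module R N]
    (m : ℕ) : Prop :=
  ∃ f : N →ₗ[R] (Fin m → R), ∃ g : (Fin m → R) →ₗ[R] N, f.comp g = LinearMap.id

/-- In a nontrivial Artinian local ring the socle is nonzero: there is a nonzero element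
killed by the maximal ideal. -/
lemma exists_socle_elt {R : Type*} [CommRing R] [IsArtinianRing R] [IsLocalRing R]
    [Nontrivial R] :
    ∃ x : R, x ≠ 0 ∧ ∀ a ∈ IsLocalRing.maximalIdeal R, a * x = 0 := by
  obtain ⟨n₀, hn₀⟩ : IsNilpotent (IsLocalRing.maximalIdeal R) := by
    rw [← IsLocalRing.jacobson_eq_maximalIdeal (⊥ : Ideal R) bot_ne_top]
    exact IsArtinianRing.isNilpotent_jacobson_bot
  have hex : ∃ n, IsLocalRing.maximalIdeal R ^ n = ⊥ := ⟨n₀, hn₀⟩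
  classical
  set n := Nat.find hex with hn
  have hnbot : IsLocalRing.maximalIdeal R ^ n = ⊥ := Nat.find_spec hex
  have hnpos : n ≠ 0 := by
    intro h0
    rw [h0, pow_zero, Ideal.one_eq_top] at hnbot
    exact top_ne_bot hnbot
  have hprev : IsLocalRing.maximalIdeal R ^ (n - 1) ≠ ⊥ :=
    Nat.find_min hex (Nat.sub_lt (Nat.pos_of_ne_zero hnpos) one_pos)
  obtain ⟨x, hx, hx0⟩ := Submodule.exists_mem_ne_zero_of_ne_bot hprev
  refine ⟨x, hx0, fun a ha => ?_⟩
  have : a * x ∈ IsLocalRing.maximalIdeal R ^ n := by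
    have : IsLocalRing.maximalIdeal R ^ n
        = IsLocalRing.maximalIdeal R ^ (n - 1) * IsLocalRing.maximalIdeal R := by
      conv_lhs => rw [← Nat.succ_pred_eq_of_pos (Nat.pos_of_ne_zero hnpos)]
      rw [pow_succ]
      rfl
    rw [this, mul_comm a x]
    exact Ideal.mul_mem_mul hx ha
  rwa [hnbot, Submodule.mem_bot] at this

/-- Over an Artinian local ring, every nontrivial finitely generated module admits a
nonzero linear functional. -/
lemma exists_nonzero_functional {R : Type*} [CommRing R] [IsArtinianRing R] [IsLocalRing R]
    (C : Type*) [AddCommGroup C] [Module R C] [Module.Finite R C] [Nontrivial C] :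
    ∃ φ : C →ₗ[R] R, φ ≠ 0 := by
  have : Nontrivial R := by
    by_contra hR
    have : Subsingleton R := not_nontrivial_iff_subsingleton.mp hR
    have : Subsingleton C := Module.subsingleton R C
    exact not_subsingleton C this
  obtain ⟨x, hx0, hxm⟩ := exists_socle_elt (R := R)
  -- find a maximal proper submodule N of C
  have hcoatomic : IsCoatomic (Submodule R C) :=
    CompleteLattice.coatomic_of_top_compact
      ((Submodule.fg_iff_compact ⊤).mp (Module.finite_def.mp inferInstance))
  have : Nontrivial (Submodule R C) := ⟨⊥, ⊤, bot_ne_top⟩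
  obtain ⟨N, hNcoatom⟩ := IsCoatomic.exists_coatom (α := Submodule R C)
  have hNmem : N ≠ ⊤ := hNcoatom.1
  have hsimple : IsSimpleModule R (C ⧸ N) := isSimpleModule_iff_isCoatom.mpr hNcoatom
  -- pick a nonzero element of the simple quotient
  obtain ⟨c, hc⟩ : ∃ c : C, c ∉ N := by
    by_contra hc
    push_neg at hc
    exact hNmem (Submodule.eq_top_iff'.mpr hc)
  set s : C ⧸ N := Submodule.Quotient.mk c with hs
  have hs0 : s ≠ 0 := by
    simpa [hs, Submodule.Quotient.mk_eq_zero] using hc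
  set ℓ : R →ₗ[R] C ⧸ N := LinearMap.toSpanSingleton R (C ⧸ N) s with hℓ
  have hsurj : Function.Surjective ℓ := IsSimpleModule.toSpanSingleton_surjective R hs0
  have hkermax : Ideal.IsMaximal (LinearMap.ker ℓ) :=
    IsSimpleModule.ker_toSpanSingleton_isMaximal R hs0
  have hker : LinearMap.ker ℓ = IsLocalRing.maximalIdeal R :=
    IsLocalRing.eq_maximalIdeal hkermax
  -- the lift R ⧸ ker ℓ → R sending 1 to x
  have hle : LinearMap.ker ℓ ≤ LinearMap.ker (LinearMap.toSpanSingleton R R x) := by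
    intro a ha
    rw [hker] at ha
    simp [LinearMap.mem_ker, LinearMap.toSpanSingleton_apply, smul_eq_mul, hxm a ha]
  set lift : (R ⧸ LinearMap.ker ℓ) →ₗ[R] R :=
    Submodule.liftQ (LinearMap.ker ℓ) (LinearMap.toSpanSingleton R R x) hle with hlift
  set e : (R ⧸ LinearMap.ker ℓ) ≃ₗ[R] C ⧸ N := ℓ.quotKerEquivOfSurjective hsurj with he
  refine ⟨lift ∘ₗ (e.symm : (C ⧸ N) →ₗ[R] (R ⧸ LinearMap.ker ℓ)) ∘ₗ N.mkQ, ?_⟩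
  intro hzero
  have h1 : e (Submodule.Quotient.mk (1 : R)) = s := by
    show ℓ 1 = s
    simp [hℓ, LinearMap.toSpanSingleton_apply]
  have h2 : e.symm s = Submodule.Quotient.mk (1 : R) := by
    rw [← h1, LinearEquiv.symm_apply_apply]
  have := LinearMap.congr_fun hzero c
  simp only [LinearMap.comp_apply, LinearMap.coe_coe, LinearEquiv.coe_coe, Submodule.mkQ_apply,
    LinearMap.zero_apply] at this
  rw [show (Submodule.Quotient.mk c : C ⧸ N) = s from rfl, h2] at this
  apply hx0
  have h7 : lift (Submodule.Quotient.mk (1 : R)) = x := by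
    rw [hlift, Submodule.liftQ_apply, LinearMap.toSpanSingleton_apply, one_smul]
  rw [← h7]
  exact this

/-- Over an Artinian local ring, a proper submodule of a f.g. module is contained in the
kernel of some nonzero functional. -/
lemma exists_functional_vanishing {R : Type*} [CommRing R] [IsArtinianRing R] [IsLocalRing R]
    (N : Type*) [AddCommGroup N] [Module R N] [Module.Finite R N]
    (p : Submodule R N) (hp : p ≠ ⊤) :
    ∃ ψ : N →ₗ[R] R, ψ ≠ 0 ∧ p ≤ LinearMap.ker ψ := by
  have : Nontrivial (N ⧸ p) := Submodule.Quotient.nontrivial_iff.mpr hp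
  obtain ⟨φ, hφ⟩ := exists_nonzero_functional (R := R) (N ⧸ p)
  refine ⟨φ ∘ₗ p.mkQ, ?_, ?_⟩
  · intro h0
    apply hφ
    apply LinearMap.ext
    intro q
    obtain ⟨y, rfl⟩ := Submodule.mkQ_surjective p q
    simpa using LinearMap.congr_fun h0 y
  · intro y hy
    simp [LinearMap.mem_ker, (Submodule.Quotient.mk_eq_zero p).mpr hy]

/-- Let `R` be a commutative Artinian local ring, `M` a finitely
generated `R`-module and `m ≥ 0`. If `Hom_R(M, R)` has a direct summand that is free of
rank `m`, then `M` has a direct summand that is free of rank `m`. -/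
theorem fibers_stmt12 {R : Type*} [CommRing R] [IsArtinianRing R] [IsLocalRing R]
    (M : Type*) [AddCommGroup M] [Module R M] [Module.Finite R M] (m : ℕ)
    (h : HasFreeSummand R (M →ₗ[R] R) m) :
    HasFreeSummand R M m := by
  classical
  obtain ⟨f, g, hfg⟩ := h
  -- the evaluation map M → R^m given by the functionals g eᵢ, eᵢ the canonical basis
  set h0 : M →ₗ[R] (Fin m → R) :=
    LinearMap.pi (fun i => g (fun j => if i = j then (1 : R) else 0)) with hh0
  have hsurj : Function.Surjective h0 := by
    rw [← LinearMap.range_eq_top]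
    by_contra hne
    obtain ⟨ψ, hψ0, hψker⟩ :=
      exists_functional_vanishing (R := R) (Fin m → R) (LinearMap.range h0) hne
    set v : Fin m → R := fun i => ψ (fun j => if i = j then (1 : R) else 0) with hv
    have hgv : g v = 0 := by
      ext x
      have h3 : ψ (h0 x) = 0 := hψker (LinearMap.mem_range_self h0 x)
      have h2 : ψ (h0 x) = ∑ i, g (fun j => if i = j then (1 : R) else 0) x * v i := by
        rw [LinearMap.pi_apply_eq_sum_univ ψ (h0 x)]
        refine Finset.sum_congr rfl (fun i _ => ?_)
        rw [smul_eq_mul]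
        congr 1
      have h1 : g v x = ∑ i, g (fun j => if i = j then (1 : R) else 0) x * v i := by
        rw [LinearMap.pi_apply_eq_sum_univ g v, LinearMap.sum_apply]
        refine Finset.sum_congr rfl (fun i _ => ?_)
        rw [LinearMap.smul_apply, smul_eq_mul, mul_comm]
      rw [LinearMap.zero_apply, h1, ← h2, h3]
    have hv0 : v = 0 := by
      have h5 := LinearMap.congr_fun hfg v
      rw [LinearMap.comp_apply, hgv, map_zero, LinearMap.id_apply] at h5
      exact h5.symm
    apply hψ0
    refine LinearMap.ext fun u => ?_
    rw [LinearMap.zero_apply, LinearMap.pi_apply_eq_sum_univ ψ u]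
    refine Finset.sum_eq_zero (fun i _ => ?_)
    have : ψ (fun j => if i = j then (1 : R) else 0) = 0 := congrFun hv0 i
    rw [this, smul_zero]
  obtain ⟨s, hs⟩ := Module.projective_lifting_property h0 (LinearMap.id) hsurj
  exact ⟨h0, s, hs⟩
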